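/- Let d ≥ 1, let b, s ∈ ℝ and let u⁺, u⁻, B⁺, B⁻ ∈ ℝ^d (Euclidean space with the standard inner product · and norm ‖·‖). Define the jumps j_u = u⁺ − u⁻ and j_B = B⁺ − B⁻, the averages m_u = ½(u⁺ + u⁻) and m_B = ½(B⁺ + B⁻), and the numerical fluxes û = m_u + (s/2) j_B and B̂ = m_B + (s/2) j_u. Then b ( B̂ · j_u + û · j_B ) = b ( u⁺·B⁺ − u⁻·B⁻ ) + (b·s/2) ( ‖j_u‖² + ‖j_B‖² ). In particular, if b·s ≤ 0 then b ( B̂·j_u + û·j_B ) − b ( u⁺·B⁺ − u⁻·B⁻ ) = −(|b·s|/2)(‖j_u‖² + ‖j_B‖²) ≤ 0. -/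

import Mathlib

/-- Facet-level algebraic identity for the magnetic upwinding fluxes: with jumps
`j_u = u⁺ - u⁻`, `j_B = B⁺ - B⁻`, averages `m_u = ½(u⁺+u⁻)`, `m_B = ½(B⁺+B⁻)`,
and fluxes `û = m_u + (s/2) j_B`, `B̂ = m_B + (s/2) j_u`, we have
`b(B̂·j_u + û·j_B) = b(u⁺·B⁺ - u⁻·B⁻) + (bs/2)(‖j_u‖² + ‖j_B‖²)`; in particular,
if `bs ≤ 0` the flux difference equals `-(|bs|/2)(‖j_u‖² + ‖j_B‖²) ≤ 0`. -/
theorem facet_flux_identity_magnetic (d : ℕ) (hd : 1 ≤ d) (b s : ℝ)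
    (up um Bp Bm ju jB mu mB uhat Bhat : EuclideanSpace ℝ (Fin d))
    (hju : ju = up - um) (hjB : jB = Bp - Bm)
    (hmu : mu = ((1 : ℝ)/2) • (up + um)) (hmB : mB = ((1 : ℝ)/2) • (Bp + Bm))
    (huhat : uhat = mu + (s/2) • jB) (hBhat : Bhat = mB + (s/2) • ju) :
    b * ((inner ℝ Bhat ju : ℝ) + (inner ℝ uhat jB : ℝ))
      = b * ((inner ℝ up Bp : ℝ) - (inner ℝ um Bm : ℝ))
        + (b * s / 2) * (‖ju‖ ^ 2 + ‖jB‖ ^ 2)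
    ∧ (b * s ≤ 0 →
        (b * ((inner ℝ Bhat ju : ℝ) + (inner ℝ uhat jB : ℝ))
            - b * ((inner ℝ up Bp : ℝ) - (inner ℝ um Bm : ℝ))
          = -(|b * s| / 2) * (‖ju‖ ^ 2 + ‖jB‖ ^ 2))
        ∧ -(|b * s| / 2) * (‖ju‖ ^ 2 + ‖jB‖ ^ 2) ≤ 0) := by
  subst hju hjB hmu hmB huhat hBhat
  have key : b * ((inner ℝ (((1 : ℝ)/2) • (Bp + Bm) + (s/2) • (up - um)) (up - um) : ℝ)
        + (inner ℝ (((1 : ℝ)/2) • (up + um) + (s/2) • (Bp - Bm)) (Bp - Bm) : ℝ))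
      = b * ((inner ℝ up Bp : ℝ) - (inner ℝ um Bm : ℝ))
        + (b * s / 2) * (‖up - um‖ ^ 2 + ‖Bp - Bm‖ ^ 2) := by
    simp only [inner_add_left, inner_sub_left, inner_sub_right, inner_add_right,
      inner_smul_left, inner_smul_right, RCLike.conj_to_real, ← real_inner_self_eq_norm_sq]
    have h1 : (inner ℝ up Bm : ℝ) = inner ℝ Bm up := real_inner_comm _ _
    have h2 : (inner ℝ um Bp : ℝ) = inner ℝ Bp um := real_inner_comm _ _
    have h3 : (inner ℝ up Bp : ℝ) = inner ℝ Bp up := real_inner_comm _ _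
    have h4 : (inner ℝ um Bm : ℝ) = inner ℝ Bm um := real_inner_comm _ _
    have h5 : (inner ℝ um up : ℝ) = inner ℝ up um := real_inner_comm _ _
    have h6 : (inner ℝ Bm Bp : ℝ) = inner ℝ Bp Bm := real_inner_comm _ _
    ring_nf
    rw [h1, h2, h3, h4, h5, h6]
    ring
  refine ⟨key, fun hbs => ⟨?_, ?_⟩⟩
  · rw [key, abs_of_nonpos hbs]; ring
  · have h1 : (0:ℝ) ≤ ‖up - um‖ ^ 2 + ‖Bp - Bm‖ ^ 2 := by positivity
    have h2 : (0:ℝ) ≤ |b * s| / 2 := by positivity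
    nlinarith
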